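/- Let H be a hypergraph with edge ideal I ⊆ k[x_1,...,x_n]. A monomial X^a lies in the symbolic power I^(m) if and only if for every monomial X^b of degree at most m−1 dividing X^a, the monomial X^a / X^b lies in I. -/

import Mathlib

open MvPolynomial

noncomputable def symbolicPower {R : Type*} [CommRing R] (I : Ideal R) (n : ℕ) : Ideal R :=
  sInf { J : Ideal R | ∃ (p : Ideal R) (hp : p.IsPrime),
    p ∈ associatedPrimes R (R ⧸ I) ∧
    J = Ideal.comap (algebraMap R (Localization (@Ideal.primeCompl R _ p hp)))
        (Ideal.map (algebraMap R (Localization (@Ideal.primeCompl R _ p hp))) (I ^ n)) }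

noncomputable def edgeIdeal (k : Type*) {V : Type*} [CommRing k] [DecidableEq V]
    (E : Finset (Finset V)) : Ideal (MvPolynomial V k) :=
  Ideal.span ((fun e : Finset V => ∏ x ∈ e, (X x : MvPolynomial V k)) '' ↑E)

/-!
The associated primes of a squarefree monomial ideal `I` are the primes `P_W = (x_v : v ∈ W)` of
the minimal vertex covers `W`, so `X^a ∈ I^(m)` iff for every minimal cover `W` some `s ∉ P_W` has
`s X^a ∈ I^m`. As `I^m ⊆ P_W^m`, and every monomial of an element of `P_W^m` has degree `≥ m` in
the variables of `W`, this forces `deg_W a ≥ m`. Conversely, if `u` is the product of the vertices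
outside `W`, each `x_v u` with `v ∈ W` is divisible by an edge, so `u^(deg_W a) X^a ∈ I^(deg_W a)`.

The condition `deg_W a ≥ m` for all minimal covers is the divisibility condition in disguise:
removing `b = a|_W` from `a` leaves a monomial vanishing on the cover `W`, hence outside `I`; and
if `X^(a-b) ∉ I`, the zeros of `a - b` contain a minimal cover `W`, so `deg_W a ≤ deg_W b ≤ |b|`.
-/

namespace Finsupp

variable {σ : Type*}

def degreeOn (W : Finset σ) (c : σ →₀ ℕ) : ℕ := ∑ v ∈ W, c v

theorem degreeOn_add (W : Finset σ) (c d : σ →₀ ℕ) :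
    degreeOn W (c + d) = degreeOn W c + degreeOn W d :=
  Finset.sum_add_distrib

theorem degreeOn_mono (W : Finset σ) : Monotone (degreeOn W) :=
  fun _ _ h => Finset.sum_le_sum fun v _ => h v

theorem degreeOn_le_degree (W : Finset σ) (c : σ →₀ ℕ) : degreeOn W c ≤ c.degree :=
  Finset.sum_le_sum_of_ne_zero fun _ _ hv => Finsupp.mem_support_iff.2 hv

theorem degree_filter_mem (W : Finset σ) (c : σ →₀ ℕ) [DecidablePred (· ∈ W)] :
    (c.filter (· ∈ W)).degree = degreeOn W c := by
  have hsupp : (c.filter (· ∈ W)).support ⊆ W := fun v hv => by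
    simpa [support_filter] using (Finset.mem_filter.1 hv).2
  rw [degree_apply, Finset.sum_subset hsupp fun v _ hv => notMem_support_iff.1 hv, degreeOn]
  exact Finset.sum_congr rfl fun v hv => filter_apply_pos _ _ hv

end Finsupp

namespace MvPolynomial

open Finsupp

variable {σ R : Type*}

section CommSemiring

variable [CommSemiring R]

theorem prod_X_eq_monomial (s : Finset σ) :
    ∏ x ∈ s, (X x : MvPolynomial σ R) = monomial (∑ x ∈ s, Finsupp.single x 1) 1 :=
  (monomial_sum_one s _).symm

theorem prod_X_pow_dvd_monomial (W : Finset σ) (a : σ →₀ ℕ) :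
    ∏ v ∈ W, X v ^ a v ∣ (monomial a 1 : MvPolynomial σ R) := by
  classical
  rw [← prod_X_pow_eq_monomial]
  calc ∏ v ∈ W, (X v : MvPolynomial σ R) ^ a v = ∏ v ∈ W ∩ a.support, X v ^ a v :=
        (Finset.prod_subset Finset.inter_subset_left fun _ _ hva => by simp_all).symm
    _ ∣ ∏ v ∈ a.support, X v ^ a v :=
        Finset.prod_dvd_prod_of_subset _ _ _ Finset.inter_subset_right

theorem sum_single_one_le_iff (s : Finset σ) (c : σ →₀ ℕ) :
    ∑ x ∈ s, Finsupp.single x 1 ≤ c ↔ ∀ x ∈ s, c x ≠ 0 := by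
  classical
  simp only [Finsupp.le_def, Finsupp.finsetSum_apply, Finsupp.single_apply,
    Finset.sum_ite_eq', ← Nat.one_le_iff_ne_zero]
  refine ⟨fun h x hx => by simpa [hx] using h x, fun h x => ?_⟩
  split_ifs with hx
  exacts [h x hx, Nat.zero_le _]

theorem X_mem_span_X_image_iff [Nontrivial R] {i : σ} {s : Set σ} :
    (X i : MvPolynomial σ R) ∈ Ideal.span (X '' s) ↔ i ∈ s := by
  classical
  simp [mem_ideal_span_X_image, support_X, Finsupp.single_apply]

theorem pow_span_X_image_le_restrictSupportIdeal (W : Finset σ) (n : ℕ) :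
    Ideal.span (X '' (W : Set σ)) ^ n ≤ restrictSupportIdeal (R := R) {c | n ≤ degreeOn W c}
      fun _ _ hcd hc => hc.trans (degreeOn_mono W hcd) := by
  classical
  induction n with
  | zero => exact fun f _ c _ => Nat.zero_le _
  | succ n ih =>
    rw [pow_succ, Ideal.mul_le]
    intro f hf g hg c hc
    obtain ⟨c₁, hc₁, c₂, hc₂, rfl⟩ := Finset.mem_add.1 (support_mul f g hc)
    obtain ⟨i, hi, hc₂i⟩ := mem_ideal_span_X_image.1 hg c₂ hc₂
    have h₁ : n ≤ degreeOn W c₁ := ih hf hc₁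
    have h₂ : 1 ≤ degreeOn W c₂ :=
      (Nat.one_le_iff_ne_zero.2 hc₂i).trans (Finset.single_le_sum (fun _ _ => Nat.zero_le _) hi)
    show n + 1 ≤ degreeOn W (c₁ + c₂)
    rw [degreeOn_add]
    omega

theorem le_degreeOn_of_mul_monomial_mem_pow {W : Finset σ} {n : ℕ} {s : MvPolynomial σ R}
    {a : σ →₀ ℕ} (hs : s ∉ Ideal.span (X '' (W : Set σ)))
    (h : s * monomial a 1 ∈ Ideal.span (X '' (W : Set σ)) ^ n) : n ≤ degreeOn W a := by
  simp only [mem_ideal_span_X_image, not_forall, not_exists, not_and, not_not] at hs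
  obtain ⟨c, hc, hcW⟩ := hs
  have hca : c + a ∈ (s * monomial a 1).support := by
    rwa [mem_support_iff, coeff_mul_monomial, mul_one, ← mem_support_iff]
  calc n ≤ degreeOn W (c + a) := pow_span_X_image_le_restrictSupportIdeal W n h hca
    _ = degreeOn W a := by rw [degreeOn_add, degreeOn, Finset.sum_eq_zero hcW, zero_add]

end CommSemiring

section CommRing

variable [CommRing R]

theorem ker_killCompl_subtypeVal (s : Set σ) :
    RingHom.ker (killCompl (R := R) (Subtype.val_injective (p := (· ∈ sᶜ)))) =
      Ideal.span (X '' s) := by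
  ext p
  rw [RingHom.mem_ker, ← support_eq_empty, support_killCompl, mem_ideal_span_X_image,
    Finset.eq_empty_iff_forall_notMem]
  simp only [Finset.mem_preimage]
  constructor
  · intro h c hc
    by_contra! hcs
    obtain ⟨d, rfl⟩ := (Finsupp.mem_range_mapDomain_iff (Subtype.val : ↥sᶜ → σ)
      Subtype.val_injective c).2 fun b hb => hcs b (by simpa using hb)
    exact h d hc
  · intro h d hd
    obtain ⟨i, hi, hdi⟩ := h _ hd
    exact hdi (Finsupp.mapDomain_of_notMem_range _ _ (by simpa using hi))

theorem isPrime_span_X_image [IsDomain R] (s : Set σ) :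
    (Ideal.span (X '' s) : Ideal (MvPolynomial σ R)).IsPrime :=
  ker_killCompl_subtypeVal (R := R) s ▸ RingHom.ker_isPrime _

theorem prod_X_sdiff_notMem_span_X_image [IsDomain R] [DecidableEq σ] (t W : Finset σ) :
    ∏ x ∈ t \ W, (X x : MvPolynomial σ R) ∉ Ideal.span (X '' (W : Set σ)) := by
  have := isPrime_span_X_image (R := R) (W : Set σ)
  simp only [Ideal.IsPrime.prod_mem_iff, X_mem_span_X_image_iff, Finset.mem_sdiff]
  rintro ⟨x, ⟨_, hxW⟩, hxW'⟩
  exact hxW hxW'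

end CommRing

end MvPolynomial

theorem mem_symbolicPower_iff {R : Type*} [CommRing R] {I : Ideal R} {n : ℕ} {x : R} :
    x ∈ symbolicPower I n ↔ ∀ p ∈ associatedPrimes R (R ⧸ I), ∃ s ∉ p, s * x ∈ I ^ n := by
  simp only [symbolicPower, Submodule.mem_sInf, Set.mem_ofPred_eq]
  constructor
  · intro h p hp
    have hprime := hp.isPrime
    have := h _ ⟨p, hprime, hp, rfl⟩
    rwa [Ideal.mem_comap, IsLocalization.algebraMap_mem_map_algebraMap_iff p.primeCompl] at this
  · rintro h _ ⟨p, hp, hass, rfl⟩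
    rw [Ideal.mem_comap, IsLocalization.algebraMap_mem_map_algebraMap_iff p.primeCompl]
    exact h p hass

theorem Ideal.Quotient.mem_colon_bot_mk_iff {R : Type*} [CommRing R] {I : Ideal R} {f g : R} :
    g ∈ (⊥ : Submodule R (R ⧸ I)).colon {Ideal.Quotient.mk I f} ↔ g * f ∈ I := by
  rw [Submodule.mem_colon_singleton, Submodule.mem_bot, ← Ideal.Quotient.eq_zero_iff_mem]
  rfl

def IsVertexCover {V : Type*} (E : Finset (Finset V)) (W : Finset V) : Prop :=
  ∀ e ∈ E, ∃ x ∈ e, x ∈ W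

section Hypergraph

open Finsupp

variable {V : Type*} [DecidableEq V] {E : Finset (Finset V)} {W : Finset V}

theorem exists_minimal_isVertexCover_of_forall_exists {P : V → Prop}
    (h : ∀ e ∈ E, ∃ x ∈ e, P x) : ∃ W, Minimal (IsVertexCover E) W ∧ ∀ v ∈ W, P v := by
  classical
  have hcover : IsVertexCover E ((E.biUnion id).filter P) := fun e he =>
    let ⟨x, hx, hPx⟩ := h e he
    ⟨x, hx, Finset.mem_filter.2 ⟨Finset.mem_biUnion.2 ⟨e, he, hx⟩, hPx⟩⟩
  obtain ⟨W, hWle, hW⟩ := exists_minimal_le_of_wellFoundedLT _ _ hcover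
  exact ⟨W, hW, fun v hv => (Finset.mem_filter.1 (hWle hv)).2⟩

theorem Minimal.exists_edge_inter_eq_singleton (hW : Minimal (IsVertexCover E) W) {v : V}
    (hv : v ∈ W) : ∃ e ∈ E, e ∩ W = {v} := by
  have hnot : ¬ IsVertexCover E (W.erase v) := hW.not_prop_of_lt (Finset.erase_ssubset hv)
  simp only [IsVertexCover, not_forall, not_exists, not_and, Finset.mem_erase] at hnot
  obtain ⟨e, he, hfree⟩ := hnot
  obtain ⟨x, hx, hxW⟩ := hW.prop e he
  have hxv : x = v := by_contra fun hne => hfree x hx hne hxW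
  subst hxv
  refine ⟨e, he, Finset.ext fun y => ?_⟩
  simp only [Finset.mem_inter, Finset.mem_singleton]
  exact ⟨fun ⟨hy, hyW⟩ => by_contra fun hne => hfree y hy hne hyW, by rintro rfl; exact ⟨hx, hxW⟩⟩

theorem forall_exists_edge_iff_le_degreeOn {m : ℕ} (hm : 1 ≤ m) (a : V →₀ ℕ) :
    (∀ b ≤ a, b.degree ≤ m - 1 → ∃ e ∈ E, ∀ x ∈ e, (a - b) x ≠ 0) ↔
      ∀ W, Minimal (IsVertexCover E) W → m ≤ degreeOn W a := by
  constructor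
  · intro h W hW
    by_contra! hlt
    have hle : a.filter (· ∈ W) ≤ a := fun v => by
      rw [filter_apply]; split_ifs <;> simp
    obtain ⟨e, he, hne⟩ := h _ hle (by rw [degree_filter_mem]; omega)
    obtain ⟨x, hx, hxW⟩ := hW.prop e he
    exact hne x hx (by simp [filter_apply_pos _ _ hxW])
  · intro h b hb hdeg
    by_contra! hfree
    obtain ⟨W, hW, hzero⟩ := exists_minimal_isVertexCover_of_forall_exists hfree
    have hab : degreeOn W a ≤ degreeOn W b := Finset.sum_le_sum fun v hv => by
      simpa [tsub_eq_zero_iff_le] using hzero v hv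
    have := h W hW
    have := degreeOn_le_degree W b
    omega

variable {k : Type*} [CommRing k]

theorem mem_edgeIdeal_iff {f : MvPolynomial V k} :
    f ∈ edgeIdeal k E ↔ ∀ c ∈ f.support, ∃ e ∈ E, ∀ x ∈ e, c x ≠ 0 := by
  simp only [edgeIdeal, prod_X_eq_monomial]
  rw [← Set.image_image (g := fun c => monomial c (1 : k)), mem_ideal_span_monomial_image]
  simp only [Set.mem_image, Finset.mem_coe, exists_exists_and_eq_and, sum_single_one_le_iff]

theorem monomial_mem_edgeIdeal_iff [Nontrivial k] {c : V →₀ ℕ} :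
    monomial c (1 : k) ∈ edgeIdeal k E ↔ ∃ e ∈ E, ∀ x ∈ e, c x ≠ 0 := by
  classical
  simp [mem_edgeIdeal_iff, support_monomial]

theorem prod_X_mem_edgeIdeal {e s : Finset V} (he : e ∈ E) (hes : e ⊆ s) :
    ∏ x ∈ s, (X x : MvPolynomial V k) ∈ edgeIdeal k E := by
  rw [← Finset.prod_sdiff hes]
  exact Ideal.mul_mem_left _ _ (Ideal.subset_span ⟨e, he, rfl⟩)

theorem edgeIdeal_le_span_X_image (hW : IsVertexCover E W) :
    edgeIdeal k E ≤ Ideal.span (X '' (W : Set V)) := by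
  rw [edgeIdeal, Ideal.span_le]
  rintro _ ⟨e, he, rfl⟩
  obtain ⟨x, hx, hxW⟩ := hW e he
  exact Ideal.mem_of_dvd _ (Finset.dvd_prod_of_mem _ hx) (Ideal.subset_span ⟨x, hxW, rfl⟩)

theorem X_mul_prod_X_sdiff_mem_edgeIdeal (hW : Minimal (IsVertexCover E) W) {v : V}
    (hv : v ∈ W) :
    X v * ∏ x ∈ E.biUnion id \ W, (X x : MvPolynomial V k) ∈ edgeIdeal k E := by
  obtain ⟨e, he, heW⟩ := hW.exists_edge_inter_eq_singleton hv
  rw [← Finset.prod_insert (by simp [hv])]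
  refine prod_X_mem_edgeIdeal he fun x hx => ?_
  by_cases hxW : x ∈ W
  · simp [← Finset.mem_singleton.1 (heW ▸ Finset.mem_inter.2 ⟨hx, hxW⟩)]
  · exact Finset.mem_insert_of_mem (Finset.mem_sdiff.2 ⟨Finset.mem_biUnion.2 ⟨e, he, hx⟩, hxW⟩)

theorem prod_X_sdiff_pow_mul_monomial_mem (hW : Minimal (IsVertexCover E) W) (a : V →₀ ℕ) :
    (∏ x ∈ E.biUnion id \ W, X x) ^ degreeOn W a * monomial a (1 : k) ∈
      edgeIdeal k E ^ degreeOn W a := by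
  obtain ⟨r, hr⟩ := prod_X_pow_dvd_monomial (R := k) W a
  rw [hr, ← mul_assoc, degreeOn, ← Finset.prod_pow_eq_pow_sum, ← Finset.prod_pow_eq_pow_sum,
    ← Finset.prod_mul_distrib]
  refine Ideal.mul_mem_right _ _ (Ideal.prod_mem_prod fun v hv => ?_)
  rw [← mul_pow, mul_comm]
  exact Ideal.pow_mem_pow (X_mul_prod_X_sdiff_mem_edgeIdeal hW hv) _

variable [IsDomain k]

theorem colon_mk_prod_X_sdiff_eq_span_X_image (hW : Minimal (IsVertexCover E) W) :
    (⊥ : Submodule (MvPolynomial V k) (MvPolynomial V k ⧸ edgeIdeal k E)).colon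
        {Ideal.Quotient.mk _ (∏ x ∈ E.biUnion id \ W, X x)} = Ideal.span (X '' (W : Set V)) := by
  have hprime := isPrime_span_X_image (R := k) (W : Set V)
  refine le_antisymm (fun g hg => ?_) ?_
  · rw [Ideal.Quotient.mem_colon_bot_mk_iff] at hg
    refine (hprime.mem_or_mem (edgeIdeal_le_span_X_image hW.prop hg)).resolve_right ?_
    exact prod_X_sdiff_notMem_span_X_image _ _
  · rw [Ideal.span_le]
    rintro _ ⟨v, hv, rfl⟩
    exact Ideal.Quotient.mem_colon_bot_mk_iff.2 (X_mul_prod_X_sdiff_mem_edgeIdeal hW hv)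

theorem span_X_image_mem_associatedPrimes (hW : Minimal (IsVertexCover E) W) :
    Ideal.span (X '' (W : Set V)) ∈
      associatedPrimes (MvPolynomial V k) (MvPolynomial V k ⧸ edgeIdeal k E) :=
  ⟨isPrime_span_X_image _, _, by
    rw [colon_mk_prod_X_sdiff_eq_span_X_image hW, (isPrime_span_X_image _).radical]⟩

theorem exists_minimal_isVertexCover_le_span_X_image {p : Ideal (MvPolynomial V k)}
    (hp : p ∈ associatedPrimes (MvPolynomial V k) (MvPolynomial V k ⧸ edgeIdeal k E)) :
    ∃ W, Minimal (IsVertexCover E) W ∧ p ≤ Ideal.span (X '' (W : Set V)) := by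
  obtain ⟨hprime, x, hx⟩ := hp
  obtain ⟨f, rfl⟩ := Ideal.Quotient.mk_surjective x
  have hf : f ∉ edgeIdeal k E := fun hf => hprime.ne_top <| by
    rw [hx, Ideal.radical_eq_top, Ideal.eq_top_iff_one, Ideal.Quotient.mem_colon_bot_mk_iff,
      one_mul]
    exact hf
  simp only [mem_edgeIdeal_iff, not_forall, not_exists, not_and, not_not, exists_prop] at hf
  obtain ⟨c, hc, hcE⟩ := hf
  obtain ⟨W, hW, hcW⟩ := exists_minimal_isVertexCover_of_forall_exists hcE
  have hWprime := isPrime_span_X_image (R := k) (W : Set V)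
  have hfW : f ∉ Ideal.span (X '' (W : Set V)) := fun hfW => by
    obtain ⟨i, hi, hci⟩ := mem_ideal_span_X_image.1 hfW c hc
    exact hci (hcW i hi)
  refine ⟨W, hW, fun g hg => ?_⟩
  obtain ⟨n, hn⟩ := Ideal.mem_radical_iff.1 (hx ▸ hg)
  rw [Ideal.Quotient.mem_colon_bot_mk_iff] at hn
  exact hWprime.mem_of_pow_mem n
    ((hWprime.mem_or_mem (edgeIdeal_le_span_X_image hW.prop hn)).resolve_right hfW)

theorem monomial_mem_symbolicPower_edgeIdeal_iff {m : ℕ} {a : V →₀ ℕ} :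
    monomial a (1 : k) ∈ symbolicPower (edgeIdeal k E) m ↔
      ∀ W, Minimal (IsVertexCover E) W → m ≤ degreeOn W a := by
  rw [mem_symbolicPower_iff]
  constructor
  · intro h W hW
    obtain ⟨s, hs, hsa⟩ := h _ (span_X_image_mem_associatedPrimes hW)
    exact le_degreeOn_of_mul_monomial_mem_pow hs
      (Ideal.pow_right_mono (edgeIdeal_le_span_X_image hW.prop) m hsa)
  · intro h p hp
    obtain ⟨W, hW, hpW⟩ := exists_minimal_isVertexCover_le_span_X_image hp
    refine ⟨_, fun hs => ?_,
      Ideal.pow_le_pow_right (h W hW) (prod_X_sdiff_pow_mul_monomial_mem hW a)⟩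
    exact prod_X_sdiff_notMem_span_X_image _ _
      ((isPrime_span_X_image (R := k) (W : Set V)).mem_of_pow_mem _ (hpW hs))

end Hypergraph

theorem stmt18_general {k V : Type*} [Field k] [DecidableEq V]
    (E : Finset (Finset V))
    (m : ℕ) (hm : 1 ≤ m) (a : V →₀ ℕ) :
    (monomial a (1 : k)) ∈ symbolicPower (edgeIdeal k E) m ↔
      ∀ b : V →₀ ℕ, b ≤ a → (b.sum fun _ e => e) ≤ m - 1 →
        (monomial (a - b) (1 : k)) ∈ edgeIdeal k E := by
  simp only [monomial_mem_symbolicPower_edgeIdeal_iff, monomial_mem_edgeIdeal_iff]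
  exact (forall_exists_edge_iff_le_degreeOn hm a).symm

/-- Sullivant: a monomial Xᵃ lies in the m-th symbolic power of the
edge ideal of a simple hypergraph iff for every monomial Xᵇ of degree at most m-1
dividing Xᵃ, the quotient Xᵃ/Xᵇ lies in the edge ideal. -/
theorem stmt18 {k V : Type*} [Field k] [Fintype V] [DecidableEq V]
    (E : Finset (Finset V))
    (hne : ∀ e ∈ E, e.Nonempty)
    (hantichain : ∀ e₁ ∈ E, ∀ e₂ ∈ E, e₁ ⊆ e₂ → e₁ = e₂)
    (m : ℕ) (hm : 1 ≤ m) (a : V →₀ ℕ) :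
    (monomial a (1 : k)) ∈ symbolicPower (edgeIdeal k E) m ↔
      ∀ b : V →₀ ℕ, b ≤ a → (b.sum fun _ e => e) ≤ m - 1 →
        (monomial (a - b) (1 : k)) ∈ edgeIdeal k E :=
  stmt18_general E m hm a
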